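/- Let (Γ, T, n⊥, n, κ_g, τ_g) be a closed asymptotic curve in ℝ³ (with n of class C²). Then ∫₀^{2π} ⟨n″(t), n(t) × n′(t)⟩ / |n′(t)|² dt = ∫₀^{2π} κ_g(t) dt; that is, the total geodesic curvature of the spherical Gauss image n (integrated with respect to the arclength of n) equals the total geodesic curvature ∫_Γ κ_g of Γ. (The change-of-variables identity, equation (11), used in Note 5.2.) -/

import Mathlib

/-! The integrand is identically `κ_g`, so the integrals agree without any change of variables.
From `n′ = -τ_g (n × T)` one gets `n × n′ = τ_g T` and `|n′|² = τ_g²`, and differentiating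
`⟨n′, T⟩ = 0` gives `⟨n″, T⟩ = -⟨n′, T′⟩ = τ_g κ_g`; hence the integrand is
`τ_g · τ_g κ_g / τ_g² = κ_g`. -/

open Real intervalIntegral

noncomputable section

/-- The cross product on `EuclideanSpace ℝ (Fin 3)`. -/
def cross3 (a b : EuclideanSpace ℝ (Fin 3)) : EuclideanSpace ℝ (Fin 3) :=
  (EuclideanSpace.equiv (Fin 3) ℝ).symm
    (crossProduct ((EuclideanSpace.equiv (Fin 3) ℝ) a) ((EuclideanSpace.equiv (Fin 3) ℝ) b))

open scoped RealInnerProductSpace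

section CrossProduct

variable (a b : EuclideanSpace ℝ (Fin 3))

lemma cross3_apply (i : Fin 3) :
    cross3 a b i = ![a 1 * b 2 - a 2 * b 1, a 2 * b 0 - a 0 * b 2, a 0 * b 1 - a 1 * b 0] i := by
  simp [cross3, crossProduct]

lemma inner_cross3_self_right : ⟪cross3 a b, b⟫ = 0 := by
  simp [PiLp.inner_apply, Fin.sum_univ_three, cross3_apply]
  ring

lemma inner_cross3_cross3_self : ⟪cross3 a b, cross3 a b⟫ = ⟪a, a⟫ * ⟪b, b⟫ - ⟪a, b⟫ ^ 2 := by
  simp [PiLp.inner_apply, Fin.sum_univ_three, cross3_apply, EuclideanSpace.real_norm_sq_eq]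
  ring

lemma cross3_smul_right (c : ℝ) : cross3 a (c • b) = c • cross3 a b := by
  ext i
  fin_cases i <;> simp [cross3_apply] <;> ring

lemma cross3_cross3_self_left : cross3 a (cross3 a b) = ⟪a, b⟫ • a - ⟪a, a⟫ • b := by
  ext i
  fin_cases i <;>
    simp [cross3_apply, PiLp.inner_apply, Fin.sum_univ_three, EuclideanSpace.real_norm_sq_eq] <;>
    ring

end CrossProduct

lemma inner_cross3_cross3_self_of_orthonormal {a b : EuclideanSpace ℝ (Fin 3)}
    (ha : ‖a‖ = 1) (hb : ‖b‖ = 1) (hab : ⟪a, b⟫ = 0) :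
    ⟪cross3 a b, cross3 a b⟫ = 1 := by
  rw [inner_cross3_cross3_self, real_inner_self_eq_norm_sq, real_inner_self_eq_norm_sq, ha, hb,
    hab]
  norm_num

lemma inner_deriv_left_eq_neg_of_inner_eventually_eq_zero
    {E : Type*} [NormedAddCommGroup E] [InnerProductSpace ℝ E] {f g : ℝ → E} {t : ℝ}
    (hf : DifferentiableAt ℝ f t) (hg : DifferentiableAt ℝ g t)
    (h : ∀ᶠ s in nhds t, ⟪f s, g s⟫ = 0) :
    ⟪deriv f t, g t⟫ = -⟪f t, deriv g t⟫ := by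
  have hderiv := (hf.hasDerivAt.inner ℝ hg.hasDerivAt).congr_of_eventuallyEq
    (h.mono fun _ hs => hs.symm)
  have hzero := hderiv.unique (hasDerivAt_const t (0 : ℝ))
  linarith

lemma inner_deriv_deriv_cross3_div_norm_sq_eq {T n : ℝ → EuclideanSpace ℝ (Fin 3)}
    {κg τg : ℝ → ℝ} {t : ℝ}
    (hTdiff : DifferentiableAt ℝ T t) (hn'diff : DifferentiableAt ℝ (deriv n) t)
    (hT1 : ‖T t‖ = 1) (hn1 : ‖n t‖ = 1) (hnT : ⟪n t, T t⟫ = 0) (hτ : τg t ≠ 0)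
    (hT' : deriv T t = κg t • cross3 (n t) (T t))
    (hn' : ∀ s, deriv n s = -τg s • cross3 (n s) (T s)) :
    ⟪deriv (deriv n) t, cross3 (n t) (deriv n t)⟫ / ‖deriv n t‖ ^ 2 = κg t := by
  have hB : ⟪cross3 (n t) (T t), cross3 (n t) (T t)⟫ = 1 :=
    inner_cross3_cross3_self_of_orthonormal hn1 hT1 hnT
  have hcross : cross3 (n t) (deriv n t) = τg t • T t := by
    rw [hn' t, cross3_smul_right, cross3_cross3_self_left, hnT, real_inner_self_eq_norm_sq, hn1]
    module
  have hnorm : ‖deriv n t‖ ^ 2 = τg t ^ 2 := by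
    rw [← real_inner_self_eq_norm_sq, hn' t, real_inner_smul_left, real_inner_smul_right, hB]
    ring
  have hn'T : ∀ s, ⟪deriv n s, T s⟫ = 0 := fun s => by
    rw [hn' s, real_inner_smul_left, inner_cross3_self_right, mul_zero]
  have hn''T : ⟪deriv (deriv n) t, T t⟫ = τg t * κg t := by
    rw [inner_deriv_left_eq_neg_of_inner_eventually_eq_zero hn'diff hTdiff
      (Filter.Eventually.of_forall hn'T), hn' t, hT', real_inner_smul_left,
      real_inner_smul_right, hB]
    ring
  rw [hcross, real_inner_smul_right, hn''T, hnorm]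
  field_simp

theorem stmt11_general
    (Γ n : ℝ → EuclideanSpace ℝ (Fin 3)) (κg τg : ℝ → ℝ)
    (hΓ : ContDiff ℝ 2 Γ)
    (hT1 : ∀ t, ‖deriv Γ t‖ = 1)
    (hn1 : ∀ t, ‖n t‖ = 1)
    (hnT : ∀ t, (inner ℝ (n t) (deriv Γ t) : ℝ) = 0)
    (hτ : ∀ t, τg t ≠ 0)
    (hDarboux1 : ∀ t, deriv (deriv Γ) t = κg t • cross3 (n t) (deriv Γ t))
    (hDarboux3 : ∀ t, deriv n t = -τg t • cross3 (n t) (deriv Γ t))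
    (hn2 : ContDiff ℝ 2 n) :
    ∫ t in (0 : ℝ)..(2 * π),
        (inner ℝ (deriv (deriv n) t) (cross3 (n t) (deriv n t)) : ℝ) / ‖deriv n t‖ ^ 2
      = ∫ t in (0 : ℝ)..(2 * π), κg t := by
  have hT : Differentiable ℝ (deriv Γ) :=
    (contDiff_succ_iff_deriv.mp hΓ).2.2.differentiable one_ne_zero
  have hn' : Differentiable ℝ (deriv n) :=
    (contDiff_succ_iff_deriv.mp hn2).2.2.differentiable one_ne_zero
  refine integral_congr fun t _ => ?_
  exact inner_deriv_deriv_cross3_div_norm_sq_eq (hT t) (hn' t) (hT1 t) (hn1 t) (hnT t) (hτ t)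
    (hDarboux1 t) hDarboux3

/-- Equation (11): the total geodesic curvature of the spherical Gauss image `n` equals
the total geodesic curvature `∫ κ_g` of `Γ`. -/
theorem stmt11
    (Γ n : ℝ → EuclideanSpace ℝ (Fin 3)) (κg τg : ℝ → ℝ)
    (hΓ : ContDiff ℝ 2 Γ) (hΓper : Function.Periodic Γ (2 * π))
    (hT1 : ∀ t, ‖deriv Γ t‖ = 1)
    (hn : ContDiff ℝ 1 n) (hnper : Function.Periodic n (2 * π))
    (hn1 : ∀ t, ‖n t‖ = 1)
    (hnT : ∀ t, (inner ℝ (n t) (deriv Γ t) : ℝ) = 0)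
    (hκcont : Continuous κg) (hκper : Function.Periodic κg (2 * π))
    (hτcont : Continuous τg) (hτper : Function.Periodic τg (2 * π))
    (hτ : ∀ t, τg t ≠ 0)
    (hDarboux1 : ∀ t, deriv (deriv Γ) t = κg t • cross3 (n t) (deriv Γ t))
    (hDarboux2 : ∀ t, deriv (fun s => cross3 (n s) (deriv Γ s)) t
      = -κg t • deriv Γ t + τg t • n t)
    (hDarboux3 : ∀ t, deriv n t = -τg t • cross3 (n t) (deriv Γ t))
    (hn2 : ContDiff ℝ 2 n) :
    ∫ t in (0 : ℝ)..(2 * π),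
        (inner ℝ (deriv (deriv n) t) (cross3 (n t) (deriv n t)) : ℝ) / ‖deriv n t‖ ^ 2
      = ∫ t in (0 : ℝ)..(2 * π), κg t :=
  stmt11_general Γ n κg τg hΓ hT1 hn1 hnT hτ hDarboux1 hDarboux3 hn2
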